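/- arXiv:1209.1791 — 5 statements merged into one kernel-verified Lean document; each statement's English description precedes it below -/
import Mathlib

section
/- For a discrete-time Dynkin game with horizon N, payoff H(σ,τ) = X_σ 1_{σ<τ} + Y_τ 1_{τ≤σ}, and value process V defined by the backward recursion, the stopped process V_{n ∧ σ* ∧ τ*} is a martingale, where σ* = min{n : V_n = X_n} ∧ N and τ* = min{n : V_n = Y_n} ∧ N. -/
/-!
Before `σ* ∧ τ*` the value `V n` differs from both `X n` and `Y n`, so the recursion forces
`V n = 𝔼[V (n + 1) | ℱ n]` there. The increment of the stopped process from `n` to `n + 1` is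
`1_{n < σ* ∧ τ*} (V (n + 1) - V n)`, and since `{n < σ* ∧ τ*}` is `ℱ n`-measurable its conditional
expectation given `ℱ n` vanishes.
-/

open MeasureTheory

section StoppedProcess

variable {Ω E : Type*} {m : MeasurableSpace Ω}

theorem stoppedProcess_add_one_eq_add_indicator [AddCommGroup E] (f : ℕ → Ω → E)
    (τ : Ω → WithTop ℕ) (n : ℕ) :
    stoppedProcess f τ (n + 1) =
      stoppedProcess f τ n + {ω | (n : WithTop ℕ) < τ ω}.indicator (f (n + 1) - f n) := by
  funext ω
  rcases lt_or_ge (n : WithTop ℕ) (τ ω) with h | h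
  · rw [Pi.add_apply, Set.indicator_of_mem (s := {ω | (n : WithTop ℕ) < τ ω}) h,
      stoppedProcess_eq_of_le (i := n + 1) (ENat.natCast_add_one_le_iff.mpr h),
      stoppedProcess_eq_of_le (i := n) h.le, Pi.sub_apply, add_sub_cancel]
  · rw [Pi.add_apply, Set.indicator_of_notMem (s := {ω | (n : WithTop ℕ) < τ ω}) h.not_gt,
      add_zero, stoppedProcess_eq_of_ge (i := n) h,
      stoppedProcess_eq_of_ge (i := n + 1) (h.trans (by simp))]

variable [NormedAddCommGroup E] [NormedSpace ℝ E] [CompleteSpace E] {μ : Measure Ω}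
  [IsFiniteMeasure μ] {ℱ : Filtration ℕ m}

theorem martingale_stoppedProcess_of_ae_eq_condExp {f : ℕ → Ω → E} {τ : Ω → WithTop ℕ}
    (hadp : StronglyAdapted ℱ f) (hint : ∀ n, Integrable (f n) μ) (hτ : IsStoppingTime ℱ τ)
    (hf : ∀ n : ℕ, ∀ᵐ ω ∂μ, (n : WithTop ℕ) < τ ω → f n ω = μ[f (n + 1) | ℱ n] ω) :
    Martingale (stoppedProcess f τ) ℱ μ := by
  have hadp_stopped := hadp.stoppedProcess_of_discrete hτ
  have hint_stopped := integrable_stoppedProcess hτ hint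
  refine martingale_nat hadp_stopped hint_stopped fun n => ?_
  set A := {ω | (n : WithTop ℕ) < τ ω}
  have hA : MeasurableSet[ℱ n] A := hτ.measurableSet_gt n
  have hincr : Integrable (f (n + 1) - f n) μ := (hint (n + 1)).sub (hint n)
  have hcond_incr : μ[f (n + 1) - f n | ℱ n] =ᵐ[μ] μ[f (n + 1) | ℱ n] - f n :=
    (condExp_sub (hint (n + 1)) (hint n) _).trans
      (by rw [condExp_of_stronglyMeasurable (ℱ.le n) (hadp n) (hint n)])
  rw [stoppedProcess_add_one_eq_add_indicator]
  filter_upwards [condExp_add (hint_stopped n) (hincr.indicator (ℱ.le n _ hA)) (ℱ n),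
    condExp_indicator hincr hA, hcond_incr, hf n] with ω h_add h_ind h_incr hfω
  rw [h_add, Pi.add_apply, h_ind,
    condExp_of_stronglyMeasurable (ℱ.le n) (hadp_stopped n) (hint_stopped n)]
  by_cases hω : ω ∈ A
  · rw [Set.indicator_of_mem hω, h_incr, Pi.sub_apply, hfω hω, sub_self, add_zero]
  · rw [Set.indicator_of_notMem hω, add_zero]

end StoppedProcess

theorem isStoppingTime_sInf_setOf {Ω : Type*} {m : MeasurableSpace Ω} {ℱ : Filtration ℕ m}
    {P : ℕ → Ω → Prop} {N : ℕ} (hP : ∀ n ≤ N, MeasurableSet[ℱ n] {ω | P n ω})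
    (hPN : ∀ ω, P N ω) :
    IsStoppingTime ℱ (fun ω => ((sInf {n | P n ω} : ℕ) : WithTop ℕ)) := by
  intro n
  convert MeasurableSet.biUnion (Set.to_countable (Set.Iic (min n N))) fun k hk =>
    ℱ.mono (hk.trans (min_le_left _ _)) _ (hP k (hk.trans (min_le_right _ _))) using 1
  ext ω
  simp only [Set.mem_ofPred_eq, ENat.some_eq_natCast, Nat.cast_le, Set.mem_iUnion, Set.mem_Iic,
    exists_prop]
  constructor
  · intro h
    exact ⟨_, le_min h (Nat.sInf_le (hPN ω)), Nat.sInf_mem (s := {k | P k ω}) ⟨N, hPN ω⟩⟩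
  · rintro ⟨k, hk, hPk⟩
    exact (Nat.sInf_le (s := {k | P k ω}) hPk).trans (hk.trans (min_le_left _ _))

section DynkinValue

variable {Ω : Type*} {m : MeasurableSpace Ω}

def IsDynkinValue (μ : Measure Ω) (ℱ : Filtration ℕ m) (N : ℕ) (X Y V : ℕ → Ω → ℝ) : Prop :=
  V N = X N ∧ ∀ n < N, V n = fun ω => min (X n ω) (max (Y n ω) (μ[V (n + 1) | ℱ n] ω))

variable {μ : Measure Ω} {ℱ : Filtration ℕ m} {N n : ℕ} {X Y V : ℕ → Ω → ℝ}

theorem IsDynkinValue.stronglyMeasurable (hV : IsDynkinValue μ ℱ N X Y V) (hX : Adapted ℱ X)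
    (hY : Adapted ℱ Y) (hn : n ≤ N) : StronglyMeasurable[ℱ n] (V n) := by
  rcases hn.lt_or_eq with hn | rfl
  · rw [hV.2 n hn]
    exact ((hX n).min ((hY n).max stronglyMeasurable_condExp.measurable)).stronglyMeasurable
  · rw [hV.1]
    exact (hX n).stronglyMeasurable

theorem IsDynkinValue.integrable (hV : IsDynkinValue μ ℱ N X Y V)
    (hXi : ∀ n, Integrable (X n) μ) (hYi : ∀ n, Integrable (Y n) μ) (hn : n ≤ N) :
    Integrable (V n) μ := by
  rcases hn.lt_or_eq with hn | rfl
  · rw [hV.2 n hn]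
    exact (hXi n).inf ((hYi n).sup integrable_condExp)
  · rw [hV.1]
    exact hXi n

theorem IsDynkinValue.isStoppingTime_sInf_eq (hV : IsDynkinValue μ ℱ N X Y V)
    (hX : Adapted ℱ X) (hY : Adapted ℱ Y) {Z : ℕ → Ω → ℝ} (hZ : Adapted ℱ Z) (hXZ : X N = Z N) :
    IsStoppingTime ℱ fun ω => ((sInf {n | V n ω = Z n ω} : ℕ) : WithTop ℕ) :=
  isStoppingTime_sInf_setOf
    (fun n hn => (hV.stronglyMeasurable hX hY hn).measurableSet_eq_fun (hZ n).stronglyMeasurable)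
    (fun ω => congrFun (hV.1.trans hXZ) ω)

theorem IsDynkinValue.eq_condExp_of_lt_sInf (hV : IsDynkinValue μ ℱ N X Y V) {ω : Ω}
    (hσ : n < sInf {k | V k ω = X k ω}) (hτ : n < sInf {k | V k ω = Y k ω}) :
    V n ω = μ[V (n + 1) | ℱ n] ω := by
  have hrec := congrFun (hV.2 n (hσ.trans_le (Nat.sInf_le (congrFun hV.1 ω)))) ω
  rcases min_choice (X n ω) (max (Y n ω) (μ[V (n + 1) | ℱ n] ω)) with h | h
  · exact absurd (hrec.trans h) (Nat.notMem_of_lt_sInf hσ)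
  rcases max_choice (Y n ω) (μ[V (n + 1) | ℱ n] ω) with h' | h'
  · exact absurd (hrec.trans (h.trans h')) (Nat.notMem_of_lt_sInf hτ)
  · exact hrec.trans (h.trans h')

end DynkinValue

theorem dynkin_stopped_value_martingale_general {Ω : Type*} {m : MeasurableSpace Ω} {μ : Measure Ω}
    [IsProbabilityMeasure μ] (ℱ : Filtration ℕ m) (N : ℕ) (X Y V : ℕ → Ω → ℝ)
    (hX : Adapted ℱ X) (hY : Adapted ℱ Y)
    (hXi : ∀ n, Integrable (X n) μ) (hYi : ∀ n, Integrable (Y n) μ)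
    (hterm : X N = Y N)
    (hVN : V N = X N)
    (hVrec : ∀ n < N, V n = fun ω => min (X n ω) (max (Y n ω) ((μ[V (n + 1) | ℱ n]) ω)))
    (σs τs : Ω → ℕ)
    (hσ : ∀ ω, σs ω = sInf {n | V n ω = X n ω})
    (hτ : ∀ ω, τs ω = sInf {n | V n ω = Y n ω}) :
    Martingale (fun n ω => V (min n (min (σs ω) (τs ω))) ω) ℱ μ := by
  have hV : IsDynkinValue μ ℱ N X Y V := ⟨hVN, hVrec⟩
  have hσ_stop : IsStoppingTime ℱ fun ω => (σs ω : WithTop ℕ) := by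
    simpa only [hσ] using hV.isStoppingTime_sInf_eq hX hY hX rfl
  have hτ_stop : IsStoppingTime ℱ fun ω => (τs ω : WithTop ℕ) := by
    simpa only [hτ] using hV.isStoppingTime_sInf_eq hX hY hY hterm
  have hσN : ∀ ω, σs ω ≤ N := fun ω => (hσ ω).trans_le (Nat.sInf_le (congrFun hVN ω))
  set π : Ω → ℕ := fun ω => min (σs ω) (τs ω)
  have hπ_stop : IsStoppingTime ℱ fun ω => (π ω : WithTop ℕ) := hσ_stop.min hτ_stop
  -- `V n` is unconstrained for `n > N`, so stop a process frozen at time `N` instead.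
  set W : ℕ → Ω → ℝ := fun n => V (min n N)
  have hstopped :
      (fun n ω => V (min n (π ω)) ω) = stoppedProcess W fun ω => (π ω : WithTop ℕ) := by
    funext n ω
    show V _ ω = V (min (min n (π ω)) N) ω
    rw [min_eq_left ((min_le_right _ _).trans ((min_le_left _ _).trans (hσN ω)))]
  rw [hstopped]
  refine martingale_stoppedProcess_of_ae_eq_condExp
    (fun n => (hV.stronglyMeasurable hX hY (min_le_right n N)).mono (ℱ.mono (min_le_left n N)))
    (fun n => hV.integrable hXi hYi (min_le_right n N)) hπ_stop
    fun n => ae_of_all _ fun ω hn => ?_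
  have hnπ : n < π ω := WithTop.coe_lt_coe.mp hn
  have hnN : n < N := hnπ.trans_le ((min_le_left _ _).trans (hσN ω))
  simp only [W, min_eq_left hnN.le, min_eq_left (Nat.succ_le_of_lt hnN)]
  exact hV.eq_condExp_of_lt_sInf ((hσ ω) ▸ hnπ.trans_le (min_le_left _ _))
    ((hτ ω) ▸ hnπ.trans_le (min_le_right _ _))

/-- For the discrete-time Dynkin game value process `V` defined by backward
recursion, the process stopped at `σ* ∧ τ*` is a martingale, where `σ*` and `τ*` are the
first times `V` hits `X` resp. `Y`. -/
theorem dynkin_stopped_value_martingale {Ω : Type*} {m : MeasurableSpace Ω} {μ : Measure Ω}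
    [IsProbabilityMeasure μ] (ℱ : Filtration ℕ m) (N : ℕ) (X Y V : ℕ → Ω → ℝ)
    (hX : Adapted ℱ X) (hY : Adapted ℱ Y)
    (hXi : ∀ n, Integrable (X n) μ) (hYi : ∀ n, Integrable (Y n) μ)
    (hord : ∀ n < N, ∀ ω, Y n ω ≤ X n ω) (hterm : X N = Y N)
    (hVN : V N = X N)
    (hVrec : ∀ n < N, V n = fun ω => min (X n ω) (max (Y n ω) ((μ[V (n + 1) | ℱ n]) ω)))
    (σs τs : Ω → ℕ)
    (hσ : ∀ ω, σs ω = sInf {n | V n ω = X n ω})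
    (hτ : ∀ ω, τs ω = sInf {n | V n ω = Y n ω}) :
    Martingale (fun n ω => V (min n (min (σs ω) (τs ω))) ω) ℱ μ :=
  dynkin_stopped_value_martingale_general ℱ N X Y V hX hY hXi hYi hterm hVN hVrec σs τs hσ hτ
end

section
/- With V, σ*, τ* defined by the Dynkin game backward recursion and hitting times, (σ*, τ*) is a saddle point: for all stopping times σ, τ ≤ N, E[H(σ*, τ)] ≤ E[H(σ*, τ*)] ≤ E[H(σ, τ*)], and V_0 = E[H(σ*, τ*)]. -/
open MeasureTheory

/-!
On `[0, N]` the value process satisfies `Y ≤ V ≤ X`. Strictly before `σ*` the minimum in the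
recursion is not attained by `X`, so `E[V_{n+1} | ℱ_n] ≤ V_n` there; strictly before `τ*` the
maximum is not attained by `Y` (as `Y_n ≤ X_n`), so `V_n ≤ E[V_{n+1} | ℱ_n]` there. By optional
stopping (if `E[V_{n+1} | ℱ_n] ≤ V_n` on `{n < ρ}` for a stopping time `ρ ≤ N`, then
`E[V_ρ] ≤ E[V_0]`) we get `E[H(σ*, τ)] ≤ E[V_{σ* ∧ τ}] ≤ E[V_0] ≤ E[V_{σ ∧ τ*}] ≤ E[H(σ, τ*)]`,
and taking `σ = σ*`, `τ = τ*` shows that `E[V_0]` is the value of the game.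
-/

namespace DynkinGame

variable {Ω : Type*} {m : MeasurableSpace Ω} {μ : Measure Ω} {ℱ : Filtration ℕ m}

theorem integrable_comp_of_mem_finset {ι E : Type*} [MeasurableSpace ι]
    [MeasurableSingletonClass ι] [NormedAddCommGroup E] {f : ι → Ω → E} {g : Ω → ι}
    (s : Finset ι) (hg : Measurable g) (hgs : ∀ ω, g ω ∈ s) (hf : ∀ i ∈ s, Integrable (f i) μ) :
    Integrable (fun ω => f (g ω) ω) μ := by
  have hsum : (fun ω => f (g ω) ω) = fun ω => ∑ i ∈ s, (g ⁻¹' {i}).indicator (f i) ω := by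
    funext ω
    rw [Finset.sum_eq_single_of_mem (g ω) (hgs ω)]
    · simp
    · exact fun i _ hi => Set.indicator_of_notMem (show ω ∉ g ⁻¹' {i} from Ne.symm hi) _
  rw [hsum]
  exact integrable_finsetSum _ fun i hi => (hf i hi).indicator (hg (measurableSet_singleton i))

theorem integrable_comp_of_le {E : Type*} [NormedAddCommGroup E] {N : ℕ} {V : ℕ → Ω → E}
    {ρ : Ω → ℕ} (hV : ∀ n ≤ N, Integrable (V n) μ) (hρ : Measurable ρ) (hρN : ∀ ω, ρ ω ≤ N) :
    Integrable (fun ω => V (ρ ω) ω) μ :=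
  integrable_comp_of_mem_finset (Finset.range (N + 1)) hρ
    (fun ω => Finset.mem_range_succ_iff.mpr (hρN ω))
    fun n hn => hV n (Finset.mem_range_succ_iff.mp hn)

theorem measurable_of_isStoppingTime {ρ : Ω → ℕ}
    (hρ : IsStoppingTime ℱ fun ω => (ρ ω : WithTop ℕ)) : Measurable ρ :=
  measurable_to_countable' fun k => by
    have h : ρ ⁻¹' {k} = {ω | (ρ ω : WithTop ℕ) = k} := by ext; simp
    exact h ▸ ℱ.le k _ (hρ.measurableSet_eq_of_countable k)

theorem measurableSet_lt_of_isStoppingTime {ρ : Ω → ℕ}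
    (hρ : IsStoppingTime ℱ fun ω => (ρ ω : WithTop ℕ)) (n : ℕ) :
    MeasurableSet[ℱ n] {ω | n < ρ ω} := by
  simpa using hρ.measurableSet_gt n

theorem isStoppingTime_min {σ τ : Ω → ℕ} (hσ : IsStoppingTime ℱ fun ω => (σ ω : WithTop ℕ))
    (hτ : IsStoppingTime ℱ fun ω => (τ ω : WithTop ℕ)) :
    IsStoppingTime ℱ fun ω => (min (σ ω) (τ ω) : WithTop ℕ) := by
  simpa only [Nat.cast_min] using hσ.min hτ

theorem isStoppingTime_sInf {N : ℕ} {P : ℕ → Ω → Prop}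
    (hP : ∀ n ≤ N, MeasurableSet[ℱ n] {ω | P n ω}) (hPN : ∀ ω, P N ω) :
    IsStoppingTime ℱ fun ω => ((sInf {n | P n ω} : ℕ) : WithTop ℕ) := by
  intro n
  have hle : ∀ ω, sInf {n | P n ω} ≤ N := fun ω => Nat.sInf_le (hPN ω)
  rcases le_or_gt N n with hNn | hnN
  · convert @MeasurableSet.univ _ (ℱ n)
    ext ω
    simpa using (hle ω).trans hNn
  · have hset :
        {ω | ((sInf {n | P n ω} : ℕ) : WithTop ℕ) ≤ n} = ⋃ k ∈ Set.Iic n, {ω | P k ω} := by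
      ext ω
      simp only [Set.mem_ofPred_eq, Nat.cast_le, Set.mem_iUnion, Set.mem_Iic, exists_prop]
      exact ⟨fun h => ⟨_, h, Nat.sInf_mem (s := {n | P n ω}) ⟨N, hPN ω⟩⟩,
        fun ⟨k, hk, hPk⟩ => (Nat.sInf_le hPk).trans hk⟩
    change MeasurableSet[ℱ n] {ω | ((sInf {n | P n ω} : ℕ) : WithTop ℕ) ≤ n}
    rw [hset]
    exact MeasurableSet.biUnion (Set.to_countable _) fun k hk =>
      ℱ.mono hk _ (hP k (le_trans hk hnN.le))

section OptionalStopping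

variable [IsFiniteMeasure μ] {V : ℕ → Ω → ℝ} {ρ : Ω → ℕ}

theorem integral_min_succ_le (hρ : IsStoppingTime ℱ fun ω => (ρ ω : WithTop ℕ)) {n : ℕ}
    (hVn : Integrable (V n) μ) (hVsucc : Integrable (V (n + 1)) μ)
    (hVρ : Integrable (fun ω => V (min (ρ ω) n) ω) μ)
    (hsup : ∀ᵐ ω ∂μ, n < ρ ω → μ[V (n + 1) | ℱ n] ω ≤ V n ω) :
    ∫ ω, V (min (ρ ω) (n + 1)) ω ∂μ ≤ ∫ ω, V (min (ρ ω) n) ω ∂μ := by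
  set A := {ω | n < ρ ω}
  have hA : MeasurableSet[ℱ n] A := measurableSet_lt_of_isStoppingTime hρ n
  have hAm : MeasurableSet A := ℱ.le n _ hA
  have hsplit : (fun ω => V (min (ρ ω) (n + 1)) ω)
      = fun ω => V (min (ρ ω) n) ω + A.indicator (V (n + 1) - V n) ω := by
    funext ω
    by_cases h : n < ρ ω
    · simp [A, h, Nat.succ_le_of_lt h, h.le]
    · simp [A, h, (not_lt.mp h).trans n.le_succ, not_lt.mp h]
  have hincr : ∫ ω in A, V (n + 1) ω ∂μ ≤ ∫ ω in A, V n ω ∂μ :=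
    calc ∫ ω in A, V (n + 1) ω ∂μ = ∫ ω in A, μ[V (n + 1) | ℱ n] ω ∂μ :=
          (setIntegral_condExp (ℱ.le n) hVsucc hA).symm
      _ ≤ ∫ ω in A, V n ω ∂μ := by
          refine setIntegral_mono_ae_restrict integrable_condExp.restrict hVn.restrict ?_
          rw [Filter.EventuallyLE, ae_restrict_iff' hAm]
          exact hsup
  rw [hsplit, integral_add hVρ ((hVsucc.sub hVn).indicator hAm), integral_indicator hAm,
    Pi.sub_def, integral_sub hVsucc.restrict hVn.restrict]
  linarith

theorem integral_stopped_le {N : ℕ} (hρ : IsStoppingTime ℱ fun ω => (ρ ω : WithTop ℕ))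
    (hρN : ∀ ω, ρ ω ≤ N) (hV : ∀ n ≤ N, Integrable (V n) μ)
    (hsup : ∀ n, ∀ᵐ ω ∂μ, n < ρ ω → μ[V (n + 1) | ℱ n] ω ≤ V n ω) :
    ∫ ω, V (ρ ω) ω ∂μ ≤ ∫ ω, V 0 ω ∂μ := by
  suffices h : ∀ n ≤ N, ∫ ω, V (min (ρ ω) n) ω ∂μ ≤ ∫ ω, V 0 ω ∂μ by
    simpa only [min_eq_left (hρN _)] using h N le_rfl
  intro n hn
  induction n with
  | zero => simp
  | succ n ih =>
    refine (integral_min_succ_le hρ (hV n (by omega)) (hV (n + 1) hn) ?_ (hsup n)).trans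
      (ih (by omega))
    exact integrable_comp_of_le hV ((measurable_of_isStoppingTime hρ).min measurable_const)
      fun ω => (min_le_right _ _).trans (by omega)

theorem integral_le_stopped {N : ℕ} (hρ : IsStoppingTime ℱ fun ω => (ρ ω : WithTop ℕ))
    (hρN : ∀ ω, ρ ω ≤ N) (hV : ∀ n ≤ N, Integrable (V n) μ)
    (hsub : ∀ n, ∀ᵐ ω ∂μ, n < ρ ω → V n ω ≤ μ[V (n + 1) | ℱ n] ω) :
    ∫ ω, V 0 ω ∂μ ≤ ∫ ω, V (ρ ω) ω ∂μ := by
  have hsup : ∀ n, ∀ᵐ ω ∂μ, n < ρ ω → μ[-V (n + 1) | ℱ n] ω ≤ -V n ω := fun n => by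
    filter_upwards [hsub n, condExp_neg (V (n + 1)) (ℱ n)] with ω hω hneg hlt
    rw [hneg, Pi.neg_apply, neg_le_neg_iff]
    exact hω hlt
  simpa only [Pi.neg_apply, integral_neg, neg_le_neg_iff] using
    integral_stopped_le (V := -V) hρ hρN (fun n hn => (hV n hn).neg) hsup

end OptionalStopping

def payoff (X Y : ℕ → Ω → ℝ) (σ τ : Ω → ℕ) (ω : Ω) : ℝ :=
  if σ ω < τ ω then X (σ ω) ω else Y (τ ω) ω

section Payoff

variable {X Y V : ℕ → Ω → ℝ} {σ τ : Ω → ℕ}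

theorem payoff_le_of_le {ω : Ω} (hσ : X (σ ω) ω ≤ V (σ ω) ω) (hτ : Y (τ ω) ω ≤ V (τ ω) ω) :
    payoff X Y σ τ ω ≤ V (min (σ ω) (τ ω)) ω := by
  unfold payoff
  split_ifs with h
  · rwa [min_eq_left h.le]
  · rwa [min_eq_right (not_lt.mp h)]

theorem le_payoff_of_le {ω : Ω} (hσ : V (σ ω) ω ≤ X (σ ω) ω) (hτ : V (τ ω) ω ≤ Y (τ ω) ω) :
    V (min (σ ω) (τ ω)) ω ≤ payoff X Y σ τ ω := by
  unfold payoff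
  split_ifs with h
  · rwa [min_eq_left h.le]
  · rwa [min_eq_right (not_lt.mp h)]

theorem integrable_payoff {N : ℕ} (hXi : ∀ n, Integrable (X n) μ) (hYi : ∀ n, Integrable (Y n) μ)
    (hσ : Measurable σ) (hτ : Measurable τ) (hσN : ∀ ω, σ ω ≤ N) (hτN : ∀ ω, τ ω ≤ N) :
    Integrable (payoff X Y σ τ) μ := by
  let s := Finset.range (N + 1)
  refine integrable_comp_of_mem_finset (f := fun p ω => if p.1 < p.2 then X p.1 ω else Y p.2 ω)
    (s ×ˢ s) (hσ.prodMk hτ) (fun ω => Finset.mem_product.mpr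
      ⟨Finset.mem_range_succ_iff.mpr (hσN ω), Finset.mem_range_succ_iff.mpr (hτN ω)⟩)
    fun p _ => ?_
  split_ifs
  exacts [hXi _, hYi _]

end Payoff

section Verification

variable [IsFiniteMeasure μ] {N : ℕ} {X Y V : ℕ → Ω → ℝ} {σ τ : Ω → ℕ}

theorem integral_payoff_le_of_condExp_le (hσ : IsStoppingTime ℱ fun ω => (σ ω : WithTop ℕ))
    (hτ : IsStoppingTime ℱ fun ω => (τ ω : WithTop ℕ)) (hσN : ∀ ω, σ ω ≤ N)
    (hτN : ∀ ω, τ ω ≤ N) (hXi : ∀ n, Integrable (X n) μ) (hYi : ∀ n, Integrable (Y n) μ)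
    (hV : ∀ n ≤ N, Integrable (V n) μ) (hXV : ∀ ω, X (σ ω) ω ≤ V (σ ω) ω)
    (hYV : ∀ n ≤ N, ∀ ω, Y n ω ≤ V n ω)
    (hsup : ∀ n, ∀ᵐ ω ∂μ, n < σ ω → μ[V (n + 1) | ℱ n] ω ≤ V n ω) :
    ∫ ω, payoff X Y σ τ ω ∂μ ≤ ∫ ω, V 0 ω ∂μ := by
  have hmσ := measurable_of_isStoppingTime hσ
  have hmτ := measurable_of_isStoppingTime hτ
  calc ∫ ω, payoff X Y σ τ ω ∂μ ≤ ∫ ω, V (min (σ ω) (τ ω)) ω ∂μ :=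
        integral_mono (integrable_payoff hXi hYi hmσ hmτ hσN hτN)
          (integrable_comp_of_le hV (hmσ.min hmτ) fun ω => (min_le_left _ _).trans (hσN ω))
          fun ω => payoff_le_of_le (hXV ω) (hYV _ (hτN ω) ω)
    _ ≤ ∫ ω, V 0 ω ∂μ :=
        integral_stopped_le (isStoppingTime_min hσ hτ)
          (fun ω => (min_le_left _ _).trans (hσN ω)) hV
          fun n => (hsup n).mono fun ω h hlt => h (lt_min_iff.mp hlt).1

theorem integral_le_payoff_of_le_condExp (hσ : IsStoppingTime ℱ fun ω => (σ ω : WithTop ℕ))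
    (hτ : IsStoppingTime ℱ fun ω => (τ ω : WithTop ℕ)) (hσN : ∀ ω, σ ω ≤ N)
    (hτN : ∀ ω, τ ω ≤ N) (hXi : ∀ n, Integrable (X n) μ) (hYi : ∀ n, Integrable (Y n) μ)
    (hV : ∀ n ≤ N, Integrable (V n) μ) (hVX : ∀ n ≤ N, ∀ ω, V n ω ≤ X n ω)
    (hVY : ∀ ω, V (τ ω) ω ≤ Y (τ ω) ω)
    (hsub : ∀ n, ∀ᵐ ω ∂μ, n < τ ω → V n ω ≤ μ[V (n + 1) | ℱ n] ω) :
    ∫ ω, V 0 ω ∂μ ≤ ∫ ω, payoff X Y σ τ ω ∂μ := by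
  have hmσ := measurable_of_isStoppingTime hσ
  have hmτ := measurable_of_isStoppingTime hτ
  calc ∫ ω, V 0 ω ∂μ ≤ ∫ ω, V (min (σ ω) (τ ω)) ω ∂μ :=
        integral_le_stopped (isStoppingTime_min hσ hτ)
          (fun ω => (min_le_left _ _).trans (hσN ω)) hV
          fun n => (hsub n).mono fun ω h hlt => h (lt_min_iff.mp hlt).2
    _ ≤ ∫ ω, payoff X Y σ τ ω ∂μ :=
        integral_mono
          (integrable_comp_of_le hV (hmσ.min hmτ) fun ω => (min_le_left _ _).trans (hσN ω))
          (integrable_payoff hXi hYi hmσ hmτ hσN hτN)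
          fun ω => le_payoff_of_le (hVX _ (hσN ω) ω) (hVY ω)

end Verification

noncomputable def firstMeet (V X : ℕ → Ω → ℝ) (ω : Ω) : ℕ :=
  sInf {n | V n ω = X n ω}

section FirstMeet

variable {N n : ℕ} {V X : ℕ → Ω → ℝ} {ω : Ω}

theorem firstMeet_le (h : V N ω = X N ω) : firstMeet V X ω ≤ N :=
  Nat.sInf_le h

theorem apply_firstMeet (h : V N ω = X N ω) : V (firstMeet V X ω) ω = X (firstMeet V X ω) ω :=
  Nat.sInf_mem (s := {n | V n ω = X n ω}) ⟨N, h⟩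

theorem ne_of_lt_firstMeet (h : n < firstMeet V X ω) : V n ω ≠ X n ω :=
  Nat.notMem_of_lt_sInf h

theorem isStoppingTime_firstMeet (hV : ∀ n ≤ N, Measurable[ℱ n] (V n)) (hX : Adapted ℱ X)
    (hN : V N = X N) : IsStoppingTime ℱ fun ω => (firstMeet V X ω : WithTop ℕ) :=
  isStoppingTime_sInf (fun n hn => measurableSet_eq_fun (hV n hn) (hX n)) (congrFun hN)

end FirstMeet

structure IsDynkinValue (μ : Measure Ω) (ℱ : Filtration ℕ m) (N : ℕ) (X Y V : ℕ → Ω → ℝ) :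
    Prop where
  terminal : V N = X N
  recursion : ∀ n < N, V n = fun ω => min (X n ω) (max (Y n ω) (μ[V (n + 1) | ℱ n] ω))

namespace IsDynkinValue

variable {N n : ℕ} {X Y V : ℕ → Ω → ℝ}

theorem le_upper (hV : IsDynkinValue μ ℱ N X Y V) (hn : n ≤ N) (ω : Ω) : V n ω ≤ X n ω := by
  rcases hn.lt_or_eq with hn | rfl
  · rw [hV.recursion n hn]
    exact min_le_left _ _
  · rw [hV.terminal]

theorem lower_le (hV : IsDynkinValue μ ℱ N X Y V) (hord : ∀ n < N, ∀ ω, Y n ω ≤ X n ω)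
    (hterm : X N = Y N) (hn : n ≤ N) (ω : Ω) : Y n ω ≤ V n ω := by
  rcases hn.lt_or_eq with hn | rfl
  · rw [hV.recursion n hn]
    exact le_min (hord n hn ω) (le_max_left _ _)
  · rw [hV.terminal, hterm]

theorem integrable (hV : IsDynkinValue μ ℱ N X Y V) (hXi : ∀ n, Integrable (X n) μ)
    (hYi : ∀ n, Integrable (Y n) μ) (hn : n ≤ N) : Integrable (V n) μ := by
  rcases hn.lt_or_eq with hn | rfl
  · rw [hV.recursion n hn]
    exact (hXi n).inf ((hYi n).sup integrable_condExp)
  · rw [hV.terminal]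
    exact hXi n

theorem measurable (hV : IsDynkinValue μ ℱ N X Y V) (hX : Adapted ℱ X) (hY : Adapted ℱ Y)
    (hn : n ≤ N) : Measurable[ℱ n] (V n) := by
  rcases hn.lt_or_eq with hn | rfl
  · rw [hV.recursion n hn]
    exact (hX n).min ((hY n).max stronglyMeasurable_condExp.measurable)
  · rw [hV.terminal]
    exact hX n

theorem condExp_le (hV : IsDynkinValue μ ℱ N X Y V) (hn : n < N) {ω : Ω} (h : V n ω ≠ X n ω) :
    μ[V (n + 1) | ℱ n] ω ≤ V n ω := by
  have hrec := congrFun (hV.recursion n hn) ω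
  rcases min_choice (X n ω) (max (Y n ω) (μ[V (n + 1) | ℱ n] ω)) with hmin | hmin
  · exact absurd (hrec.trans hmin) h
  · rw [hrec, hmin]
    exact le_max_right _ _

theorem le_condExp (hV : IsDynkinValue μ ℱ N X Y V) (hord : ∀ n < N, ∀ ω, Y n ω ≤ X n ω)
    (hn : n < N) {ω : Ω} (h : V n ω ≠ Y n ω) : V n ω ≤ μ[V (n + 1) | ℱ n] ω := by
  have hrec := congrFun (hV.recursion n hn) ω
  rcases max_choice (Y n ω) (μ[V (n + 1) | ℱ n] ω) with hmax | hmax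
  · rw [hmax, min_eq_right (hord n hn ω)] at hrec
    exact absurd hrec h
  · rw [hrec, hmax]
    exact min_le_right _ _

theorem isStoppingTime_firstMeet_upper (hV : IsDynkinValue μ ℱ N X Y V) (hX : Adapted ℱ X)
    (hY : Adapted ℱ Y) : IsStoppingTime ℱ fun ω => (firstMeet V X ω : WithTop ℕ) :=
  isStoppingTime_firstMeet (fun _ hn => hV.measurable hX hY hn) hX hV.terminal

theorem isStoppingTime_firstMeet_lower (hV : IsDynkinValue μ ℱ N X Y V) (hX : Adapted ℱ X)
    (hY : Adapted ℱ Y) (hterm : X N = Y N) :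
    IsStoppingTime ℱ fun ω => (firstMeet V Y ω : WithTop ℕ) :=
  isStoppingTime_firstMeet (fun _ hn => hV.measurable hX hY hn) hY (hV.terminal.trans hterm)

variable [IsFiniteMeasure μ]

theorem integral_payoff_firstMeet_upper_le (hV : IsDynkinValue μ ℱ N X Y V) (hX : Adapted ℱ X)
    (hY : Adapted ℱ Y) (hXi : ∀ n, Integrable (X n) μ) (hYi : ∀ n, Integrable (Y n) μ)
    (hord : ∀ n < N, ∀ ω, Y n ω ≤ X n ω) (hterm : X N = Y N) {τ : Ω → ℕ}
    (hτ : IsStoppingTime ℱ fun ω => (τ ω : WithTop ℕ)) (hτN : ∀ ω, τ ω ≤ N) :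
    ∫ ω, payoff X Y (firstMeet V X) τ ω ∂μ ≤ ∫ ω, V 0 ω ∂μ := by
  have hσN ω : firstMeet V X ω ≤ N := firstMeet_le (congrFun hV.terminal ω)
  refine integral_payoff_le_of_condExp_le (hV.isStoppingTime_firstMeet_upper hX hY) hτ hσN hτN
    hXi hYi (fun _ hn => hV.integrable hXi hYi hn)
    (fun ω => (apply_firstMeet (congrFun hV.terminal ω)).ge)
    (fun _ hn => hV.lower_le hord hterm hn) fun n => ae_of_all _ fun ω hlt => ?_
  exact hV.condExp_le (hlt.trans_le (hσN ω)) (ne_of_lt_firstMeet hlt)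

theorem integral_le_payoff_firstMeet_lower (hV : IsDynkinValue μ ℱ N X Y V) (hX : Adapted ℱ X)
    (hY : Adapted ℱ Y) (hXi : ∀ n, Integrable (X n) μ) (hYi : ∀ n, Integrable (Y n) μ)
    (hord : ∀ n < N, ∀ ω, Y n ω ≤ X n ω) (hterm : X N = Y N) {σ : Ω → ℕ}
    (hσ : IsStoppingTime ℱ fun ω => (σ ω : WithTop ℕ)) (hσN : ∀ ω, σ ω ≤ N) :
    ∫ ω, V 0 ω ∂μ ≤ ∫ ω, payoff X Y σ (firstMeet V Y) ω ∂μ := by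
  have hτN ω : firstMeet V Y ω ≤ N := firstMeet_le (congrFun (hV.terminal.trans hterm) ω)
  refine integral_le_payoff_of_le_condExp hσ (hV.isStoppingTime_firstMeet_lower hX hY hterm) hσN
    hτN hXi hYi (fun _ hn => hV.integrable hXi hYi hn) (fun _ hn => hV.le_upper hn)
    (fun ω => (apply_firstMeet (congrFun (hV.terminal.trans hterm) ω)).le)
    fun n => ae_of_all _ fun ω hlt => ?_
  exact hV.le_condExp hord (hlt.trans_le (hτN ω)) (ne_of_lt_firstMeet hlt)

theorem integral_eq_payoff_firstMeet (hV : IsDynkinValue μ ℱ N X Y V) (hX : Adapted ℱ X)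
    (hY : Adapted ℱ Y) (hXi : ∀ n, Integrable (X n) μ) (hYi : ∀ n, Integrable (Y n) μ)
    (hord : ∀ n < N, ∀ ω, Y n ω ≤ X n ω) (hterm : X N = Y N) :
    ∫ ω, V 0 ω ∂μ = ∫ ω, payoff X Y (firstMeet V X) (firstMeet V Y) ω ∂μ :=
  le_antisymm
    (hV.integral_le_payoff_firstMeet_lower hX hY hXi hYi hord hterm
      (hV.isStoppingTime_firstMeet_upper hX hY) fun ω => firstMeet_le (congrFun hV.terminal ω))
    (hV.integral_payoff_firstMeet_upper_le hX hY hXi hYi hord hterm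
      (hV.isStoppingTime_firstMeet_lower hX hY hterm)
      fun ω => firstMeet_le (congrFun (hV.terminal.trans hterm) ω))

end IsDynkinValue

end DynkinGame

/-- With `V`, `σ*`, `τ*` defined by the Dynkin game backward recursion and
hitting times, `(σ*, τ*)` is a saddle point:
`E[H(σ*, τ)] ≤ E[H(σ*, τ*)] ≤ E[H(σ, τ*)]` for all stopping times `σ, τ ≤ N`, and
`V_0 = E[H(σ*, τ*)]`, where `H(s,t) = X_s 1_{s<t} + Y_t 1_{t≤s}`. -/
theorem dynkin_saddle_point {Ω : Type*} {m : MeasurableSpace Ω} {μ : Measure Ω}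
    [IsProbabilityMeasure μ] (ℱ : Filtration ℕ m) (N : ℕ) (X Y V : ℕ → Ω → ℝ)
    (hX : Adapted ℱ X) (hY : Adapted ℱ Y)
    (hXi : ∀ n, Integrable (X n) μ) (hYi : ∀ n, Integrable (Y n) μ)
    (hord : ∀ n < N, ∀ ω, Y n ω ≤ X n ω) (hterm : X N = Y N)
    (hVN : V N = X N)
    (hVrec : ∀ n < N, V n = fun ω => min (X n ω) (max (Y n ω) ((μ[V (n + 1) | ℱ n]) ω)))
    (σs τs : Ω → ℕ)
    (hσ : ∀ ω, σs ω = sInf {n | V n ω = X n ω})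
    (hτ : ∀ ω, τs ω = sInf {n | V n ω = Y n ω}) :
    (∀ σ τ : Ω → ℕ, IsStoppingTime ℱ (fun ω => (σ ω : WithTop ℕ)) → IsStoppingTime ℱ (fun ω => (τ ω : WithTop ℕ)) →
      (∀ ω, σ ω ≤ N) → (∀ ω, τ ω ≤ N) →
      (∫ ω, (if σs ω < τ ω then X (σs ω) ω else Y (τ ω) ω) ∂μ) ≤
        (∫ ω, (if σs ω < τs ω then X (σs ω) ω else Y (τs ω) ω) ∂μ) ∧
      (∫ ω, (if σs ω < τs ω then X (σs ω) ω else Y (τs ω) ω) ∂μ) ≤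
        (∫ ω, (if σ ω < τs ω then X (σ ω) ω else Y (τs ω) ω) ∂μ)) ∧
    (∫ ω, V 0 ω ∂μ) = ∫ ω, (if σs ω < τs ω then X (σs ω) ω else Y (τs ω) ω) ∂μ := by
  have hV : DynkinGame.IsDynkinValue μ ℱ N X Y V := ⟨hVN, hVrec⟩
  obtain rfl : σs = DynkinGame.firstMeet V X := funext hσ
  obtain rfl : τs = DynkinGame.firstMeet V Y := funext hτ
  have hvalue := hV.integral_eq_payoff_firstMeet hX hY hXi hYi hord hterm
  refine ⟨fun σ τ hσst hτst hσN hτN => ⟨?_, ?_⟩, hvalue⟩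
  · exact (hV.integral_payoff_firstMeet_upper_le hX hY hXi hYi hord hterm hτst hτN).trans
      hvalue.le
  · exact hvalue.ge.trans
      (hV.integral_le_payoff_firstMeet_lower hX hY hXi hYi hord hterm hσst hσN)
end

section
/- In the CRR market with martingale measure, the game option price V given by the backward recursion V_{N,N} = (1+r)^{-N} Y_N, V_{k,N} = min((1+r)^{-k} X_k, max((1+r)^{-k} Y_k, E[V_{k+1,N}|F_k])) satisfies V_{0,N} = min_σ max_τ E[(1+r)^{-σ∧τ} H(σ,τ)] where H(s,t) = X_s 1_{s<t} + Y_t 1_{t≤s}, the min and max over stopping times with values in {0,…,N}. -/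
/-!
Write `L k = (1+r)⁻ᵏ Y k` and `U k = (1+r)⁻ᵏ X k`. The recursion keeps `L ≤ V`, and `V ≤ U`
before time `N`; moreover `V k ≤ E[V (k+1) | ℱ k]` wherever `V k ≠ L k`, while
`E[V (k+1) | ℱ k] ≤ V k` wherever `V k ≠ U k`. Let `τ*` be the first time `V` meets `L` and `σ*` the first time it meets `U`.
By optional stopping, `E[V 0] ≤ E[V (σ ∧ τ*)] ≤ E[H(σ, τ*)]` for every `σ`, and
`E[H(σ*, τ)] ≤ E[V (σ* ∧ τ)] ≤ E[V 0]` for every `τ`; so `(σ*, τ*)` is a saddle point of the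
game and `E[V 0]` is its min-max value.
-/

open MeasureTheory

namespace GameOption

open Filter Finset

theorem min_max_le_of_ne {x y c : ℝ} (hyx : y ≤ x) (h : min x (max y c) ≠ y) :
    min x (max y c) ≤ c := by
  rcases le_total c y with hcy | hyc
  · exact absurd (by rw [max_eq_left hcy, min_eq_right hyx]) h
  · exact (min_le_right _ _).trans (max_eq_right hyc).le

theorem le_min_max_of_ne {x y c : ℝ} (h : min x (max y c) ≠ x) : c ≤ min x (max y c) := by
  rcases min_cases x (max y c) with ⟨hx, _⟩ | ⟨hm, _⟩
  · exact absurd hx h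
  · rw [hm]; exact le_max_right _ _

theorem ciInf_ciSup_eq_of_saddle {α ι κ : Type*} [ConditionallyCompleteLattice α] [Nonempty κ]
    {f : ι → κ → α} {v : α} (hbdd : ∀ i, BddAbove (Set.range (f i))) (i₀ : ι) (j₀ : κ)
    (hi₀ : ∀ j, f i₀ j ≤ v) (hj₀ : ∀ i, v ≤ f i j₀) : ⨅ i, ⨆ j, f i j = v := by
  have : Nonempty ι := ⟨i₀⟩
  have hv : ∀ i, v ≤ ⨆ j, f i j := fun i => (hj₀ i).trans (le_ciSup (hbdd i) j₀)
  exact le_antisymm (ciInf_le_of_le ⟨v, Set.forall_mem_range.2 hv⟩ i₀ (ciSup_le hi₀)) (le_ciInf hv)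

variable {Ω : Type*} {m0 : MeasurableSpace Ω} {μ : Measure Ω} {ℱ : Filtration ℕ m0}

theorem sum_range_indicator_lt_sub {V : ℕ → Ω → ℝ} {ρ : Ω → ℕ} {N : ℕ} {ω : Ω}
    (hρN : ρ ω ≤ N) :
    ∑ i ∈ range N, {ω | i < ρ ω}.indicator (V (i + 1) - V i) ω = V (ρ ω) ω - V 0 ω := by
  have hfilter : (range N).filter (· < ρ ω) = range (ρ ω) := by
    ext i; simp only [mem_filter, mem_range]; omega
  simp only [Set.indicator_apply, Set.mem_ofPred_eq, Pi.sub_apply]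
  rw [← sum_filter, hfilter, sum_range_sub (fun i => V i ω)]

theorem measurable_of_isStoppingTime {σ : Ω → ℕ}
    (hσ : IsStoppingTime ℱ (fun ω => (σ ω : WithTop ℕ))) : Measurable σ :=
  measurable_to_countable' fun i => ℱ.le i _ <| by
    convert hσ.measurableSet_eq i using 1
    ext ω; simp

theorem integrable_comp_of_isStoppingTime {V : ℕ → Ω → ℝ} {ρ : Ω → ℕ} {N : ℕ}
    (hint : ∀ n ≤ N, Integrable (V n) μ) (hρ : IsStoppingTime ℱ (fun ω => (ρ ω : WithTop ℕ)))
    (hρN : ∀ ω, ρ ω ≤ N) : Integrable (fun ω => V (ρ ω) ω) μ := by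
  have hstop : (fun ω => V (ρ ω) ω) = stoppedValue (fun n => V (min n N)) (fun ω => ρ ω) := by
    funext ω
    show V (ρ ω) ω = V (min (ρ ω) N) ω
    rw [min_eq_left (hρN ω)]
  rw [hstop]
  exact integrable_stoppedValue ℕ hρ (fun n => hint _ (min_le_right _ _))
    fun ω => WithTop.coe_le_coe.2 (hρN ω)

theorem integral_le_integral_comp_of_le_condExp [IsFiniteMeasure μ] {V : ℕ → Ω → ℝ}
    {ρ : Ω → ℕ} {N : ℕ} (hint : ∀ n ≤ N, Integrable (V n) μ)
    (hρ : IsStoppingTime ℱ (fun ω => (ρ ω : WithTop ℕ))) (hρN : ∀ ω, ρ ω ≤ N)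
    (hle : ∀ i < N, ∀ᵐ ω ∂μ, i < ρ ω → V i ω ≤ μ[V (i + 1) | ℱ i] ω) :
    ∫ ω, V 0 ω ∂μ ≤ ∫ ω, V (ρ ω) ω ∂μ := by
  have hA : ∀ i, MeasurableSet[ℱ i] {ω | i < ρ ω} := fun i => by
    simpa using hρ.measurableSet_gt i
  have hincr : ∀ i ∈ range N, 0 ≤ ∫ ω in {ω | i < ρ ω}, (V (i + 1) - V i) ω ∂μ := by
    intro i hi
    have hiN : i < N := mem_range.1 hi
    simp only [Pi.sub_apply]
    rw [integral_sub (hint _ hiN).integrableOn (hint _ hiN.le).integrableOn, sub_nonneg,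
      ← setIntegral_condExp (ℱ.le i) (hint _ hiN) (hA i)]
    exact setIntegral_mono_ae_restrict (hint _ hiN.le).integrableOn integrable_condExp.integrableOn
      ((ae_restrict_iff' (ℱ.le i _ (hA i))).2 (hle i hiN))
  have htelescope : ∫ ω, V (ρ ω) ω ∂μ - ∫ ω, V 0 ω ∂μ =
      ∑ i ∈ range N, ∫ ω in {ω | i < ρ ω}, (V (i + 1) - V i) ω ∂μ := by
    rw [← integral_sub (integrable_comp_of_isStoppingTime hint hρ hρN) (hint 0 N.zero_le)]
    simp_rw [← sum_range_indicator_lt_sub (V := V) (hρN _)]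
    rw [integral_finsetSum]
    · exact sum_congr rfl fun i _ => integral_indicator (ℱ.le i _ (hA i))
    · intro i hi
      have hiN : i < N := mem_range.1 hi
      exact ((hint _ hiN).sub (hint _ hiN.le)).indicator (ℱ.le i _ (hA i))
  exact sub_nonneg.1 (htelescope ▸ sum_nonneg hincr)

theorem integral_comp_le_integral_of_condExp_le [IsFiniteMeasure μ] {V : ℕ → Ω → ℝ}
    {ρ : Ω → ℕ} {N : ℕ} (hint : ∀ n ≤ N, Integrable (V n) μ)
    (hρ : IsStoppingTime ℱ (fun ω => (ρ ω : WithTop ℕ))) (hρN : ∀ ω, ρ ω ≤ N)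
    (hle : ∀ i < N, ∀ᵐ ω ∂μ, i < ρ ω → μ[V (i + 1) | ℱ i] ω ≤ V i ω) :
    ∫ ω, V (ρ ω) ω ∂μ ≤ ∫ ω, V 0 ω ∂μ := by
  have hneg := integral_le_integral_comp_of_le_condExp (V := -V) (fun n hn => (hint n hn).neg)
    hρ hρN fun i hi => by
      filter_upwards [hle i hi, condExp_neg (V (i + 1)) (ℱ i)] with ω hω hneg hlt
      simpa [hneg] using hω hlt
  simpa [integral_neg] using hneg

theorem isStoppingTime_hittingBtwn_of_measurable {β : Type*} [MeasurableSpace β]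
    {u : ℕ → Ω → β} {s : Set β} (hs : MeasurableSet s) {N : ℕ}
    (hu : ∀ k ≤ N, Measurable[ℱ k] (u k)) :
    IsStoppingTime ℱ (fun ω => ((hittingBtwn u s 0 N ω : ℕ) : WithTop ℕ)) := by
  -- `hittingBtwn u s 0 N` only reads `u` on `[0, N]`, so `u` may be frozen after time `N`.
  have htrunc : hittingBtwn u s 0 N = hittingBtwn (fun k => u (min k N)) s 0 N := by
    funext ω
    have hmem : ∀ j ∈ Set.Icc 0 N, (u j ω ∈ s ↔ u (min j N) ω ∈ s) := fun j hj => by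
      rw [min_eq_left hj.2]
    have hset : Set.Icc 0 N ∩ {j | u j ω ∈ s} = Set.Icc 0 N ∩ {j | u (min j N) ω ∈ s} := by
      ext j; exact and_congr_right (hmem j)
    classical
    simp only [hittingBtwn, hset]
    exact if_congr (exists_congr fun j => and_congr_right (hmem j)) rfl rfl
  rw [htrunc]
  exact Adapted.isStoppingTime_hittingBtwn (fun k => (hu _ (min_le_right _ _)).mono
    (ℱ.mono (min_le_left _ _)) le_rfl) hs

theorem isStoppingTime_coe_min {σ τ : Ω → ℕ} (hσ : IsStoppingTime ℱ (fun ω => (σ ω : WithTop ℕ)))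
    (hτ : IsStoppingTime ℱ (fun ω => (τ ω : WithTop ℕ))) :
    IsStoppingTime ℱ (fun ω => ((min (σ ω) (τ ω) : ℕ) : WithTop ℕ)) := by
  have hmin : (fun ω => ((min (σ ω) (τ ω) : ℕ) : WithTop ℕ)) =
      fun ω => min (σ ω : WithTop ℕ) (τ ω) := funext fun ω => WithTop.coe_min _ _
  rw [hmin]
  exact hσ.min hτ

/-- The first time in `[0, N]` at which `V = W`, and `N` if there is none. -/
noncomputable def coincidenceTime (V W : ℕ → Ω → ℝ) (N : ℕ) : Ω → ℕ := hittingBtwn (V - W) {0} 0 N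

section CoincidenceTime

variable {V W : ℕ → Ω → ℝ} {N : ℕ} {ω : Ω}

theorem isStoppingTime_coincidenceTime (hV : ∀ k ≤ N, Measurable[ℱ k] (V k))
    (hW : ∀ k ≤ N, Measurable[ℱ k] (W k)) :
    IsStoppingTime ℱ (fun ω => (coincidenceTime V W N ω : WithTop ℕ)) :=
  isStoppingTime_hittingBtwn_of_measurable (measurableSet_singleton 0)
    fun k hk => (hV k hk).sub (hW k hk)

theorem coincidenceTime_le : coincidenceTime V W N ω ≤ N := hittingBtwn_le ω

theorem ne_of_lt_coincidenceTime {k : ℕ} (hk : k < coincidenceTime V W N ω) : V k ω ≠ W k ω :=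
  fun h => notMem_of_lt_hittingBtwn hk k.zero_le (by simp [h])

theorem apply_coincidenceTime_of_lt (h : coincidenceTime V W N ω < N) :
    V (coincidenceTime V W N ω) ω = W (coincidenceTime V W N ω) ω :=
  sub_eq_zero.1 (hittingBtwn_mem_set_of_hittingBtwn_lt h)

end CoincidenceTime

/-- The paper's discounted payoff `(1+r)^{-σ∧τ} H(σ, τ)`, with the discount folded into `U`, `L`. -/
def gamePayoff (U L : ℕ → Ω → ℝ) (σ τ : Ω → ℕ) (ω : Ω) : ℝ :=
  if σ ω < τ ω then U (σ ω) ω else L (τ ω) ω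

abbrev BoundedStoppingTime (ℱ : Filtration ℕ m0) (N : ℕ) :=
  {σ : Ω → ℕ // IsStoppingTime ℱ (fun ω => (σ ω : WithTop ℕ)) ∧ ∀ ω, σ ω ≤ N}

section Payoff

variable {U L : ℕ → Ω → ℝ} {N : ℕ}

theorem integrable_gamePayoff (hU : ∀ n, Integrable (U n) μ) (hL : ∀ n, Integrable (L n) μ)
    {σ τ : Ω → ℕ} (hσ : IsStoppingTime ℱ (fun ω => (σ ω : WithTop ℕ)))
    (hτ : IsStoppingTime ℱ (fun ω => (τ ω : WithTop ℕ))) (hσN : ∀ ω, σ ω ≤ N)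
    (hτN : ∀ ω, τ ω ≤ N) : Integrable (gamePayoff U L σ τ) μ := by
  classical
  have hpiecewise : gamePayoff U L σ τ =
      {ω | σ ω < τ ω}.piecewise (fun ω => U (σ ω) ω) (fun ω => L (τ ω) ω) := by
    ext ω; simp [gamePayoff, Set.piecewise]
  rw [hpiecewise]
  exact Integrable.piecewise
    (measurableSet_lt (measurable_of_isStoppingTime hσ) (measurable_of_isStoppingTime hτ))
    (integrable_comp_of_isStoppingTime (fun n _ => hU n) hσ hσN).integrableOn
    (integrable_comp_of_isStoppingTime (fun n _ => hL n) hτ hτN).integrableOn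

theorem gamePayoff_le_sum {σ τ : Ω → ℕ} {ω : Ω} (hσN : σ ω ≤ N) (hτN : τ ω ≤ N) :
    gamePayoff U L σ τ ω ≤ ∑ k ∈ range (N + 1), (|U k ω| + |L k ω|) := by
  have hterm : ∀ k ≤ N, |U k ω| + |L k ω| ≤ ∑ k ∈ range (N + 1), (|U k ω| + |L k ω|) :=
    fun k hk => single_le_sum (f := fun k => |U k ω| + |L k ω|) (fun j _ => by positivity)
      (mem_range.2 (Nat.lt_succ_of_le hk))
  unfold gamePayoff
  split_ifs
  · exact (le_abs_self _).trans ((le_add_of_nonneg_right (abs_nonneg _)).trans (hterm _ hσN))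
  · exact (le_abs_self _).trans ((le_add_of_nonneg_left (abs_nonneg _)).trans (hterm _ hτN))

theorem bddAbove_integral_gamePayoff (hU : ∀ n, Integrable (U n) μ)
    (hL : ∀ n, Integrable (L n) μ) (σ : BoundedStoppingTime ℱ N) :
    BddAbove (Set.range fun τ : BoundedStoppingTime ℱ N => ∫ ω, gamePayoff U L σ.1 τ.1 ω ∂μ) := by
  refine ⟨∫ ω, ∑ k ∈ range (N + 1), (|U k ω| + |L k ω|) ∂μ, ?_⟩
  rintro _ ⟨τ, rfl⟩
  exact integral_mono (integrable_gamePayoff hU hL σ.2.1 τ.2.1 σ.2.2 τ.2.2)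
    (integrable_finsetSum _ fun k _ => (hU k).abs.add (hL k).abs)
    fun ω => gamePayoff_le_sum (σ.2.2 ω) (τ.2.2 ω)

end Payoff

structure IsGameValue (ℱ : Filtration ℕ m0) (μ : Measure Ω) (N : ℕ) (L U V : ℕ → Ω → ℝ) :
    Prop where
  terminal : V N = L N
  step : ∀ k < N, ∀ ω, V k ω = min (U k ω) (max (L k ω) (μ[V (k + 1) | ℱ k] ω))

namespace IsGameValue

variable {N : ℕ} {L U V : ℕ → Ω → ℝ}

theorem measurable (hV : IsGameValue ℱ μ N L U V) (hL : Adapted ℱ L) (hU : Adapted ℱ U) {k : ℕ}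
    (hk : k ≤ N) : Measurable[ℱ k] (V k) := by
  rcases hk.lt_or_eq with hk | rfl
  · rw [funext (hV.step k hk)]
    exact (hU k).min ((hL k).max stronglyMeasurable_condExp.measurable)
  · rw [hV.terminal]
    exact hL _

theorem integrable (hV : IsGameValue ℱ μ N L U V) (hL : ∀ n, Integrable (L n) μ)
    (hU : ∀ n, Integrable (U n) μ) {k : ℕ} (hk : k ≤ N) : Integrable (V k) μ := by
  rcases hk.lt_or_eq with hk | rfl
  · rw [funext (hV.step k hk)]
    exact (hU k).inf ((hL k).sup integrable_condExp)
  · rw [hV.terminal]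
    exact hL _

theorem le_upper (hV : IsGameValue ℱ μ N L U V) {k : ℕ} (hk : k < N) (ω : Ω) :
    V k ω ≤ U k ω :=
  hV.step k hk ω ▸ min_le_left _ _

theorem lower_le (hV : IsGameValue ℱ μ N L U V) (hLU : ∀ k < N, ∀ ω, L k ω ≤ U k ω) {k : ℕ}
    (hk : k ≤ N) (ω : Ω) : L k ω ≤ V k ω := by
  rcases hk.lt_or_eq with hk | rfl
  · rw [hV.step k hk ω]
    exact le_min (hLU k hk ω) (le_max_left _ _)
  · rw [hV.terminal]

theorem le_condExp_of_ne_lower (hV : IsGameValue ℱ μ N L U V)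
    (hLU : ∀ k < N, ∀ ω, L k ω ≤ U k ω) {k : ℕ} (hk : k < N) {ω : Ω} (hne : V k ω ≠ L k ω) :
    V k ω ≤ μ[V (k + 1) | ℱ k] ω := by
  rw [hV.step k hk ω] at hne ⊢
  exact min_max_le_of_ne (hLU k hk ω) hne

theorem condExp_le_of_ne_upper (hV : IsGameValue ℱ μ N L U V) {k : ℕ} (hk : k < N) {ω : Ω}
    (hne : V k ω ≠ U k ω) : μ[V (k + 1) | ℱ k] ω ≤ V k ω := by
  rw [hV.step k hk ω] at hne ⊢
  exact le_min_max_of_ne hne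

theorem apply_coincidenceTime_lower (hV : IsGameValue ℱ μ N L U V) (ω : Ω) :
    V (coincidenceTime V L N ω) ω = L (coincidenceTime V L N ω) ω := by
  rcases coincidenceTime_le.lt_or_eq with hlt | heq
  · exact apply_coincidenceTime_of_lt hlt
  · rw [heq, hV.terminal]

variable [IsFiniteMeasure μ]

theorem integral_le_integral_gamePayoff (hV : IsGameValue ℱ μ N L U V) (hL : Adapted ℱ L)
    (hU : Adapted ℱ U) (hLi : ∀ n, Integrable (L n) μ) (hUi : ∀ n, Integrable (U n) μ)
    (hLU : ∀ k < N, ∀ ω, L k ω ≤ U k ω) {σ : Ω → ℕ}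
    (hσ : IsStoppingTime ℱ (fun ω => (σ ω : WithTop ℕ))) (hσN : ∀ ω, σ ω ≤ N) :
    ∫ ω, V 0 ω ∂μ ≤ ∫ ω, gamePayoff U L σ (coincidenceTime V L N) ω ∂μ := by
  set τ := coincidenceTime V L N
  have hτ : IsStoppingTime ℱ (fun ω => (τ ω : WithTop ℕ)) :=
    isStoppingTime_coincidenceTime (fun k hk => hV.measurable hL hU hk) fun k _ => hL k
  have hρN : ∀ ω, min (σ ω) (τ ω) ≤ N := fun ω => (min_le_left _ _).trans (hσN ω)
  have hVi : ∀ n ≤ N, Integrable (V n) μ := fun n hn => hV.integrable hLi hUi hn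
  calc ∫ ω, V 0 ω ∂μ ≤ ∫ ω, V (min (σ ω) (τ ω)) ω ∂μ :=
        integral_le_integral_comp_of_le_condExp hVi (isStoppingTime_coe_min hσ hτ) hρN
          fun i hi => Eventually.of_forall fun ω hiρ => hV.le_condExp_of_ne_lower hLU hi
            (ne_of_lt_coincidenceTime (hiρ.trans_le (min_le_right _ _)))
    _ ≤ ∫ ω, gamePayoff U L σ τ ω ∂μ := by
      refine integral_mono
        (integrable_comp_of_isStoppingTime hVi (isStoppingTime_coe_min hσ hτ) hρN)
        (integrable_gamePayoff hUi hLi hσ hτ hσN fun _ => coincidenceTime_le) fun ω => ?_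
      unfold gamePayoff
      split_ifs with h
      · rw [min_eq_left h.le]
        exact hV.le_upper (h.trans_le coincidenceTime_le) ω
      · rw [min_eq_right (not_lt.1 h)]
        exact (hV.apply_coincidenceTime_lower ω).le

theorem integral_gamePayoff_le_integral (hV : IsGameValue ℱ μ N L U V) (hL : Adapted ℱ L)
    (hU : Adapted ℱ U) (hLi : ∀ n, Integrable (L n) μ) (hUi : ∀ n, Integrable (U n) μ)
    (hLU : ∀ k < N, ∀ ω, L k ω ≤ U k ω) {τ : Ω → ℕ}
    (hτ : IsStoppingTime ℱ (fun ω => (τ ω : WithTop ℕ))) (hτN : ∀ ω, τ ω ≤ N) :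
    ∫ ω, gamePayoff U L (coincidenceTime V U N) τ ω ∂μ ≤ ∫ ω, V 0 ω ∂μ := by
  set σ := coincidenceTime V U N
  have hσ : IsStoppingTime ℱ (fun ω => (σ ω : WithTop ℕ)) :=
    isStoppingTime_coincidenceTime (fun k hk => hV.measurable hL hU hk) fun k _ => hU k
  have hρN : ∀ ω, min (σ ω) (τ ω) ≤ N := fun ω => (min_le_right _ _).trans (hτN ω)
  have hVi : ∀ n ≤ N, Integrable (V n) μ := fun n hn => hV.integrable hLi hUi hn
  calc ∫ ω, gamePayoff U L σ τ ω ∂μ ≤ ∫ ω, V (min (σ ω) (τ ω)) ω ∂μ := by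
        refine integral_mono
          (integrable_gamePayoff hUi hLi hσ hτ (fun _ => coincidenceTime_le) hτN)
          (integrable_comp_of_isStoppingTime hVi (isStoppingTime_coe_min hσ hτ) hρN) fun ω => ?_
        unfold gamePayoff
        split_ifs with h
        · rw [min_eq_left h.le]
          exact (apply_coincidenceTime_of_lt (h.trans_le (hτN ω))).ge
        · rw [min_eq_right (not_lt.1 h)]
          exact hV.lower_le hLU (hτN ω) ω
    _ ≤ ∫ ω, V 0 ω ∂μ :=
        integral_comp_le_integral_of_condExp_le hVi (isStoppingTime_coe_min hσ hτ) hρN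
          fun i hi => Eventually.of_forall fun ω hiρ => hV.condExp_le_of_ne_upper hi
            (ne_of_lt_coincidenceTime (hiρ.trans_le (min_le_left _ _)))

theorem integral_eq_iInf_iSup (hV : IsGameValue ℱ μ N L U V) (hL : Adapted ℱ L)
    (hU : Adapted ℱ U) (hLi : ∀ n, Integrable (L n) μ) (hUi : ∀ n, Integrable (U n) μ)
    (hLU : ∀ k < N, ∀ ω, L k ω ≤ U k ω) :
    ∫ ω, V 0 ω ∂μ = ⨅ σ : BoundedStoppingTime ℱ N, ⨆ τ : BoundedStoppingTime ℱ N,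
      ∫ ω, gamePayoff U L σ.1 τ.1 ω ∂μ := by
  have : Nonempty (BoundedStoppingTime ℱ N) :=
    ⟨⟨fun _ => 0, isStoppingTime_const ℱ 0, fun _ => N.zero_le⟩⟩
  have hVm : ∀ k ≤ N, Measurable[ℱ k] (V k) := fun k hk => hV.measurable hL hU hk
  refine (ciInf_ciSup_eq_of_saddle (bddAbove_integral_gamePayoff hUi hLi)
    ⟨coincidenceTime V U N, isStoppingTime_coincidenceTime hVm fun k _ => hU k,
      fun _ => coincidenceTime_le⟩
    ⟨coincidenceTime V L N, isStoppingTime_coincidenceTime hVm fun k _ => hL k,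
      fun _ => coincidenceTime_le⟩
    (fun τ => hV.integral_gamePayoff_le_integral hL hU hLi hUi hLU τ.2.1 τ.2.2)
    fun σ => hV.integral_le_integral_gamePayoff hL hU hLi hUi hLU σ.2.1 σ.2.2).symm

end IsGameValue

end GameOption

theorem crr_game_option_price_general {Ω : Type*} {m : MeasurableSpace Ω} {μ : Measure Ω}
    [IsProbabilityMeasure μ] (ℱ : Filtration ℕ m) (N : ℕ) (r : ℝ) (hr : 0 < r)
    (X Y V : ℕ → Ω → ℝ)
    (hX : Adapted ℱ X) (hY : Adapted ℱ Y)
    (hXi : ∀ n, Integrable (X n) μ) (hYi : ∀ n, Integrable (Y n) μ)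
    (hord : ∀ n < N, ∀ ω, Y n ω ≤ X n ω)
    (hVN : V N = fun ω => ((1 + r)⁻¹) ^ N * Y N ω)
    (hVrec : ∀ k < N, V k = fun ω =>
      min (((1 + r)⁻¹) ^ k * X k ω)
        (max (((1 + r)⁻¹) ^ k * Y k ω) ((μ[V (k + 1) | ℱ k]) ω))) :
    (∫ ω, V 0 ω ∂μ) =
      ⨅ σ : {σ : Ω → ℕ // IsStoppingTime ℱ (fun ω => (σ ω : WithTop ℕ)) ∧ ∀ ω, σ ω ≤ N},
        ⨆ τ : {τ : Ω → ℕ // IsStoppingTime ℱ (fun ω => (τ ω : WithTop ℕ)) ∧ ∀ ω, τ ω ≤ N},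
          ∫ ω, ((1 + r)⁻¹) ^ (min (σ.1 ω) (τ.1 ω)) *
            (if σ.1 ω < τ.1 ω then X (σ.1 ω) ω else Y (τ.1 ω) ω) ∂μ := by
  have hdiscount : 0 ≤ (1 + r)⁻¹ := inv_nonneg.2 (by linarith)
  have hV : GameOption.IsGameValue ℱ μ N (fun k ω => (1 + r)⁻¹ ^ k * Y k ω)
      (fun k ω => (1 + r)⁻¹ ^ k * X k ω) V :=
    ⟨hVN, fun k hk ω => by rw [hVrec k hk]⟩
  rw [hV.integral_eq_iInf_iSup (fun k => (hY k).const_mul _) (fun k => (hX k).const_mul _)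
    (fun k => (hYi k).const_mul _) (fun k => (hXi k).const_mul _)
    fun k hk ω => mul_le_mul_of_nonneg_left (hord k hk ω) (pow_nonneg hdiscount k)]
  refine iInf_congr fun σ => iSup_congr fun τ =>
    integral_congr_ae (Filter.Eventually.of_forall fun ω => ?_)
  simp only [GameOption.gamePayoff]
  split_ifs with h
  · rw [min_eq_left h.le]
  · rw [min_eq_right (not_lt.1 h)]

/-- In the CRR market under the martingale measure, the game option price
given by the backward recursion
`V_{N,N} = (1+r)^{-N} Y_N`, `V_{k,N} = min((1+r)^{-k} X_k, max((1+r)^{-k} Y_k, E[V_{k+1,N}|F_k]))`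
satisfies `V_{0,N} = min_σ max_τ E[(1+r)^{-σ∧τ} H(σ,τ)]`, the min and max over stopping
times with values in `{0,…,N}`, where `H(s,t) = X_s 1_{s<t} + Y_t 1_{t≤s}`. -/
theorem crr_game_option_price {Ω : Type*} {m : MeasurableSpace Ω} {μ : Measure Ω}
    [IsProbabilityMeasure μ] (ℱ : Filtration ℕ m) (N : ℕ) (r : ℝ) (hr : 0 < r)
    (X Y V : ℕ → Ω → ℝ)
    (hX : Adapted ℱ X) (hY : Adapted ℱ Y)
    (hXi : ∀ n, Integrable (X n) μ) (hYi : ∀ n, Integrable (Y n) μ)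
    (hY0 : ∀ n ω, 0 ≤ Y n ω) (hord : ∀ n < N, ∀ ω, Y n ω ≤ X n ω) (hterm : X N = Y N)
    (hVN : V N = fun ω => ((1 + r)⁻¹) ^ N * Y N ω)
    (hVrec : ∀ k < N, V k = fun ω =>
      min (((1 + r)⁻¹) ^ k * X k ω)
        (max (((1 + r)⁻¹) ^ k * Y k ω) ((μ[V (k + 1) | ℱ k]) ω))) :
    (∫ ω, V 0 ω ∂μ) =
      ⨅ σ : {σ : Ω → ℕ // IsStoppingTime ℱ (fun ω => (σ ω : WithTop ℕ)) ∧ ∀ ω, σ ω ≤ N},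
        ⨆ τ : {τ : Ω → ℕ // IsStoppingTime ℱ (fun ω => (τ ω : WithTop ℕ)) ∧ ∀ ω, τ ω ≤ N},
          ∫ ω, ((1 + r)⁻¹) ^ (min (σ.1 ω) (τ.1 ω)) *
            (if σ.1 ω < τ.1 ω then X (σ.1 ω) ω else Y (τ.1 ω) ω) ∂μ :=
  crr_game_option_price_general ℱ N r hr X Y V hX hY hXi hYi hord hVN hVrec
end

section
/- If (σ, π) is a hedge for a game option in a discrete market, i.e. the self-financing portfolio value satisfies W^π_{σ∧t} ≥ H(σ,t) for all t ∈ {0,…,N}, and the discounted portfolio value is a martingale under a martingale measure Q, then the initial capital satisfies W^π_0 ≥ sup_τ E_Q[(1+r)^{-σ∧τ} H(σ,τ)] ≥ inf_{σ'} sup_τ E_Q[(1+r)^{-σ'∧τ} H(σ',τ)]. -/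
open MeasureTheory

/-!
Stopping the discounted portfolio at `σ ∧ τ` dominates the discounted payoff of the game option,
and by optional stopping for the bounded stopping time `σ ∧ τ` its expectation is the initial
capital. Taking the supremum over `τ` gives the first inequality; the second holds because the
payoffs are nonnegative, so the infimum over `σ'` is bounded below.
-/

namespace MeasureTheory

variable {Ω E : Type*} {m : MeasurableSpace Ω} {μ : Measure Ω} {ℱ : Filtration ℕ m}
  [NormedAddCommGroup E] [NormedSpace ℝ E] [CompleteSpace E]

theorem Martingale.integral_stoppedValue_eq_integral_zero [IsFiniteMeasure μ] {f : ℕ → Ω → E}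
    (hf : Martingale f ℱ μ) {τ : Ω → WithTop ℕ} (hτ : IsStoppingTime ℱ τ) {N : ℕ}
    (hτN : ∀ ω, τ ω ≤ N) :
    ∫ ω, stoppedValue f τ ω ∂μ = ∫ ω, f 0 ω ∂μ := calc
  ∫ ω, stoppedValue f τ ω ∂μ = ∫ ω, f N ω ∂μ := by
    rw [integral_congr_ae (hf.stoppedValue_ae_eq_condExp_of_le_const hτ hτN)]
    exact integral_condExp (hτ.measurableSpace_le_of_le hτN)
  _ = ∫ ω, f 0 ω ∂μ := by
    rw [← integral_condExp (ℱ.le 0) (f := f N)]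
    exact integral_congr_ae (hf.condExp_ae_eq N.zero_le)

end MeasureTheory

theorem discounted_gamePayoff_nonneg {Ω : Type*} {X Y : ℕ → Ω → ℝ} {d : ℝ} (hd : 0 ≤ d)
    (hY0 : ∀ n ω, 0 ≤ Y n ω) (hYX : ∀ n ω, Y n ω ≤ X n ω) (s t : ℕ) (ω : Ω) :
    0 ≤ d ^ min s t * (if s < t then X s ω else Y t ω) := by
  refine mul_nonneg (pow_nonneg hd _) ?_
  split_ifs
  exacts [(hY0 s ω).trans (hYX s ω), hY0 t ω]

theorem hedge_initial_capital_ge_general {Ω : Type*} {m : MeasurableSpace Ω} {Q : Measure Ω}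
    [IsProbabilityMeasure Q] (ℱ : Filtration ℕ m) (N : ℕ) (r : ℝ) (hr : 0 < r)
    (X Y W : ℕ → Ω → ℝ)
    (hY0 : ∀ n ω, 0 ≤ Y n ω) (hYX : ∀ n ω, Y n ω ≤ X n ω)
    (σ : Ω → ℕ) (hσ : IsStoppingTime ℱ (fun ω => (σ ω : WithTop ℕ))) (hσN : ∀ ω, σ ω ≤ N)
    (hmart : Martingale (fun k ω => ((1 + r)⁻¹) ^ k * W k ω) ℱ Q)
    (hhedge : ∀ t ≤ N, ∀ ω,
      (if σ ω < t then X (σ ω) ω else Y t ω) ≤ W (min (σ ω) t) ω) :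
    (⨆ τ : {τ : Ω → ℕ // IsStoppingTime ℱ (fun ω => (τ ω : WithTop ℕ)) ∧ ∀ ω, τ ω ≤ N},
        ∫ ω, ((1 + r)⁻¹) ^ (min (σ ω) (τ.1 ω)) *
          (if σ ω < τ.1 ω then X (σ ω) ω else Y (τ.1 ω) ω) ∂Q) ≤ ∫ ω, W 0 ω ∂Q ∧
    (⨅ σ' : {σ' : Ω → ℕ // IsStoppingTime ℱ (fun ω => (σ' ω : WithTop ℕ)) ∧ ∀ ω, σ' ω ≤ N},
      ⨆ τ : {τ : Ω → ℕ // IsStoppingTime ℱ (fun ω => (τ ω : WithTop ℕ)) ∧ ∀ ω, τ ω ≤ N},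
        ∫ ω, ((1 + r)⁻¹) ^ (min (σ'.1 ω) (τ.1 ω)) *
          (if σ'.1 ω < τ.1 ω then X (σ'.1 ω) ω else Y (τ.1 ω) ω) ∂Q) ≤
      (⨆ τ : {τ : Ω → ℕ // IsStoppingTime ℱ (fun ω => (τ ω : WithTop ℕ)) ∧ ∀ ω, τ ω ≤ N},
        ∫ ω, ((1 + r)⁻¹) ^ (min (σ ω) (τ.1 ω)) *
          (if σ ω < τ.1 ω then X (σ ω) ω else Y (τ.1 ω) ω) ∂Q) := by
  have hd : (0 : ℝ) ≤ (1 + r)⁻¹ := by positivity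
  have hpayoff := discounted_gamePayoff_nonneg (X := X) hd hY0 hYX
  have : Nonempty {τ : Ω → ℕ // IsStoppingTime ℱ (fun ω => (τ ω : WithTop ℕ)) ∧ ∀ ω, τ ω ≤ N} :=
    ⟨⟨fun _ => 0, isStoppingTime_const ℱ 0, fun _ => N.zero_le⟩⟩
  refine ⟨ciSup_le fun ⟨τ, hτ, hτN⟩ => ?_, ciInf_le_of_le ?_ ⟨σ, hσ, hσN⟩ le_rfl⟩
  · have hρ : IsStoppingTime ℱ fun ω => ((min (σ ω) (τ ω) : ℕ) : WithTop ℕ) := by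
      exact_mod_cast hσ.min hτ
    have hρN : ∀ ω, ((min (σ ω) (τ ω) : ℕ) : WithTop ℕ) ≤ N := fun ω =>
      WithTop.coe_le_coe.mpr ((min_le_left _ _).trans (hσN ω))
    calc _ ≤ ∫ ω, stoppedValue (fun k ω => ((1 + r)⁻¹) ^ k * W k ω)
            (fun ω => ((min (σ ω) (τ ω) : ℕ) : WithTop ℕ)) ω ∂Q :=
          integral_mono_of_nonneg (.of_forall fun ω => hpayoff _ _ ω)
            (integrable_stoppedValue ℕ hρ hmart.integrable hρN) (.of_forall fun ω =>
              mul_le_mul_of_nonneg_left (hhedge (τ ω) (hτN ω) ω) (pow_nonneg hd _))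
      _ = ∫ ω, W 0 ω ∂Q := by
          rw [hmart.integral_stoppedValue_eq_integral_zero hρ hρN, pow_zero]
          simp only [one_mul]
  · refine ⟨0, ?_⟩
    rintro _ ⟨σ', rfl⟩
    exact Real.iSup_nonneg fun τ => integral_nonneg fun ω => hpayoff _ _ ω

/-- If `(σ, π)` is a hedge for a game option in a discrete market, i.e. the
self-financing portfolio value satisfies `W^π_{σ∧t} ≥ H(σ,t)` for all `t ∈ {0,…,N}`, and the
discounted portfolio value is a martingale under a martingale measure `Q`, then
`W^π_0 ≥ sup_τ E_Q[(1+r)^{-σ∧τ} H(σ,τ)] ≥ inf_{σ'} sup_τ E_Q[(1+r)^{-σ'∧τ} H(σ',τ)]`. -/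
theorem hedge_initial_capital_ge {Ω : Type*} {m : MeasurableSpace Ω} {Q : Measure Ω}
    [IsProbabilityMeasure Q] (ℱ : Filtration ℕ m) (N : ℕ) (r : ℝ) (hr : 0 < r)
    (X Y W : ℕ → Ω → ℝ)
    (hX : Adapted ℱ X) (hY : Adapted ℱ Y)
    (hY0 : ∀ n ω, 0 ≤ Y n ω) (hYX : ∀ n ω, Y n ω ≤ X n ω)
    (σ : Ω → ℕ) (hσ : IsStoppingTime ℱ (fun ω => (σ ω : WithTop ℕ))) (hσN : ∀ ω, σ ω ≤ N)
    (hmart : Martingale (fun k ω => ((1 + r)⁻¹) ^ k * W k ω) ℱ Q)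
    (hhedge : ∀ t ≤ N, ∀ ω,
      (if σ ω < t then X (σ ω) ω else Y t ω) ≤ W (min (σ ω) t) ω) :
    (⨆ τ : {τ : Ω → ℕ // IsStoppingTime ℱ (fun ω => (τ ω : WithTop ℕ)) ∧ ∀ ω, τ ω ≤ N},
        ∫ ω, ((1 + r)⁻¹) ^ (min (σ ω) (τ.1 ω)) *
          (if σ ω < τ.1 ω then X (σ ω) ω else Y (τ.1 ω) ω) ∂Q) ≤ ∫ ω, W 0 ω ∂Q ∧
    (⨅ σ' : {σ' : Ω → ℕ // IsStoppingTime ℱ (fun ω => (σ' ω : WithTop ℕ)) ∧ ∀ ω, σ' ω ≤ N},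
      ⨆ τ : {τ : Ω → ℕ // IsStoppingTime ℱ (fun ω => (τ ω : WithTop ℕ)) ∧ ∀ ω, τ ω ≤ N},
        ∫ ω, ((1 + r)⁻¹) ^ (min (σ'.1 ω) (τ.1 ω)) *
          (if σ'.1 ω < τ.1 ω then X (σ'.1 ω) ω else Y (τ.1 ω) ω) ∂Q) ≤
      (⨆ τ : {τ : Ω → ℕ // IsStoppingTime ℱ (fun ω => (τ ω : WithTop ℕ)) ∧ ∀ ω, τ ω ≤ N},
        ∫ ω, ((1 + r)⁻¹) ^ (min (σ ω) (τ.1 ω)) *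
          (if σ ω < τ.1 ω then X (σ ω) ω else Y (τ.1 ω) ω) ∂Q) :=
  hedge_initial_capital_ge_general ℱ N r hr X Y W hY0 hYX σ hσ hσN hmart hhedge
end

section
/- In the market with transaction costs, if 0 < S^b_t ≤ S^a_t and the payoff processes satisfy the cash–share dominance Δ_t = θ_t(X^{(1)}_t − Y^{(1)}_t, X^{(2)}_t − Y^{(2)}_t) ≥ 0 where θ_t(γ,δ) = γ + S^b_t δ⁺ − S^a_t δ⁻, then the functions q^a_t(y) = X^{(1)}_t + h_{[S^b_t, S^a_t]}(y − X^{(2)}_t) and r^a_t(y) = Y^{(1)}_t + h_{[S^b_t, S^a_t]}(y − Y^{(2)}_t) satisfy q^a_t(y) ≥ r^a_t(y) for all y ∈ ℝ. -/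
set_option maxHeartbeats 1000000

/-- In the market with transaction costs, if `0 < S^b ≤ S^a` and the payoffs
satisfy the cash–share dominance `θ(X¹ − Y¹, X² − Y²) ≥ 0` where
`θ(γ,δ) = γ + S^b δ⁺ − S^a δ⁻`, then with `h(y) = S^a y⁻ − S^b y⁺` the functions
`q^a(y) = X¹ + h(y − X²)` and `r^a(y) = Y¹ + h(y − Y²)` satisfy `q^a(y) ≥ r^a(y)` for all
`y`. -/
theorem qa_ge_ra (Sb Sa X1 X2 Y1 Y2 : ℝ) (hSb : 0 < Sb) (hS : Sb ≤ Sa)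
    (hΔ : 0 ≤ (X1 - Y1) + Sb * max (X2 - Y2) 0 - Sa * max (-(X2 - Y2)) 0) :
    ∀ y : ℝ,
      Y1 + (Sa * max (-(y - Y2)) 0 - Sb * max (y - Y2) 0) ≤
        X1 + (Sa * max (-(y - X2)) 0 - Sb * max (y - X2) 0) := by
  intro y
  simp only [max_def] at hΔ ⊢
  split_ifs at hΔ ⊢ <;> nlinarith [hSb.le, hS]
end
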